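/- Let f : ℝ → ℝ be continuously differentiable and (L,p)-Hölder smooth for some L ≥ 0, p > 0; let α ∈ (0,1) and x, c ∈ ℝ with x ≠ c, and set K = L(1−α)/(1+p−α). Then |f′(x)·|x−c|^{1−p} − δ̂^{α,p}_c f(x)| ≤ K·|x−c|. -/

import Mathlib

/-- The Caputo fractional derivative of order `α ∈ (0,1)` with terminal `c`. -/
noncomputable def caputo (α c : ℝ) (f : ℝ → ℝ) (x : ℝ) : ℝ :=
  (1 / Real.Gamma (1 - α)) * ∫ t in c..x, deriv f t / |x - t| ^ α

/-- The `p`-fractional gradient operator `δ̂^{α,p}_c f (x)`, with the convention that it is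
`0` when `x = c`. -/
noncomputable def pFracGrad (α p c : ℝ) (f : ℝ → ℝ) (x : ℝ) : ℝ :=
  if x = c then 0
  else (Real.Gamma (2 - α) * |x - c| ^ (α - p + 1) / (x - c)) * caputo α c f x

/-- `f : ℝ → ℝ` is `(L,p)`-Hölder smooth. -/
def HolderSmooth (L p : ℝ) (f : ℝ → ℝ) : Prop :=
  ∀ x y : ℝ, |f y - f x - deriv f x * (y - x)| ≤ L / (1 + p) * |y - x| ^ (1 + p)

/-!
For `c < x`, write `Γ(1-α) D^α_c f(x) = f'(x) (x-c)^(1-α)/(1-α) + R` with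
`R = ∫_c^x (f'(t) - f'(x)) (x-t)^(-α) dt`, so that the error in question is `(1-α) (x-c)^(α-p) |R|`.
Integrating `R` by parts against the Taylor remainder `g(t) = f(t) - f(x) - f'(x)(t-x)`, which is
`O(|t-x|^(1+p))` by Hölder smoothness, gives `|R| ≤ L/(1+p-α) · (x-c)^(1+p-α)`.
The case `x < c` reduces to this one through the reflection `t ↦ -f(-t)`.
-/

open MeasureTheory Set intervalIntegral

theorem intervalIntegrable_sub_rpow {q : ℝ} (hq : -1 < q) (x a b : ℝ) :
    IntervalIntegrable (fun t => (x - t) ^ q) volume a b := by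
  simpa using (intervalIntegrable_rpow' (a := x - a) (b := x - b) hq).comp_sub_left x

theorem integral_sub_rpow {q : ℝ} (hq : -1 < q) (c x : ℝ) :
    ∫ t in c..x, (x - t) ^ q = (x - c) ^ (q + 1) / (q + 1) := by
  rw [intervalIntegral.integral_comp_sub_left (fun u => u ^ q) x, integral_rpow (Or.inl hq),
    sub_self, Real.zero_rpow (by linarith), sub_zero]

/-- Integration by parts against the weight `(x - t) ^ (-α)`: the boundary term at `x`
vanishes because `g` vanishes there to order `r > α`. -/
theorem abs_integral_mul_sub_rpow_neg_le {g g' : ℝ → ℝ} {M r α c x : ℝ}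
    (hg : ∀ t, HasDerivAt g (g' t) t) (hg' : Continuous g')
    (hbound : ∀ t, |g t| ≤ M * |x - t| ^ r) (hα0 : 0 ≤ α) (hα1 : α < 1) (hαr : α < r)
    (hcx : c ≤ x) :
    |∫ t in c..x, g' t * (x - t) ^ (-α)| ≤ M * r / (r - α) * (x - c) ^ (r - α) := by
  set h : ℝ → ℝ := fun t => g t * (x - t) ^ (-α)
  have hg_cont : Continuous g := continuous_iff_continuousAt.2 fun t => (hg t).continuousAt
  have hg_bound : ∀ t < x, ∀ s, |g t| * (x - t) ^ s ≤ M * (x - t) ^ (r + s) := by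
    intro t ht s
    have hxt : 0 < x - t := sub_pos.2 ht
    rw [Real.rpow_add hxt, ← mul_assoc]
    exact mul_le_mul_of_nonneg_right (abs_of_pos hxt ▸ hbound t) (Real.rpow_nonneg hxt.le s)
  have hgx : g x = 0 := by
    simpa [Real.zero_rpow (by linarith : r ≠ 0)] using hbound x
  have hhx : h x = 0 := by simp [h, hgx]
  have hh_cont : ContinuousOn h (Icc c x) := by
    intro t ht
    rcases ht.2.lt_or_eq with htx | htx
    · exact ((hg t).continuousAt.mul ((continuousAt_const.sub continuousAt_id).rpow_const
        (Or.inl (sub_pos.2 htx).ne'))).continuousWithinAt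
    rw [htx]
    refine (continuousWithinAt_Iio_iff_Iic.1 ?_).mono fun u hu => hu.2
    rw [ContinuousWithinAt, hhx]
    refine squeeze_zero_norm' (a := fun u => M * (x - u) ^ (r - α))
      (eventually_nhdsWithin_of_forall fun u (hu : u < x) => ?_) ?_
    · rw [Real.norm_eq_abs, abs_mul, abs_of_nonneg (Real.rpow_nonneg (sub_pos.2 hu).le _),
        sub_eq_add_neg r]
      exact hg_bound u hu (-α)
    · have : ContinuousAt (fun u => M * (x - u) ^ (r - α)) x := continuousAt_const.mul
        ((continuousAt_const.sub continuousAt_id).rpow_const (Or.inr (sub_pos.2 hαr).le))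
      simpa [Real.zero_rpow (sub_pos.2 hαr).ne'] using this.tendsto.mono_left nhdsWithin_le_nhds
  have hh_deriv : ∀ t ∈ Ioo c x, HasDerivAt h
      (g' t * (x - t) ^ (-α) + α * (g t * (x - t) ^ (-α - 1))) t := by
    intro t ht
    have hxt : x - t ≠ 0 := (sub_pos.2 ht.2).ne'
    refine ((hg t).fun_mul (((hasDerivAt_id t).const_sub x).rpow_const (p := -α)
      (Or.inl hxt))).congr_deriv ?_
    simp only [id]
    ring
  have hint₁ : IntervalIntegrable (fun t => g' t * (x - t) ^ (-α)) volume c x :=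
    (intervalIntegrable_sub_rpow (by linarith) x c x).continuousOn_mul hg'.continuousOn
  have hbound₂ : ∀ᵐ t, t ∈ Ioc c x → ‖g t * (x - t) ^ (-α - 1)‖ ≤ M * (x - t) ^ (r - α - 1) := by
    filter_upwards [Measure.ae_ne volume x] with t htx ht
    rw [Real.norm_eq_abs, abs_mul, abs_of_nonneg (Real.rpow_nonneg (sub_nonneg.2 ht.2) _),
      show r - α - 1 = r + (-α - 1) by ring]
    exact hg_bound t (lt_of_le_of_ne ht.2 htx) _
  have hint_dom : IntervalIntegrable (fun t => M * (x - t) ^ (r - α - 1)) volume c x :=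
    (intervalIntegrable_sub_rpow (by linarith) x c x).const_mul M
  have hint₂ : IntervalIntegrable (fun t => g t * (x - t) ^ (-α - 1)) volume c x := by
    refine hint_dom.mono_fun' ?_ ?_
    · exact (hg_cont.measurable.mul
        ((measurable_const.sub measurable_id).pow_const _)).aestronglyMeasurable
    · rw [uIoc_of_le hcx]
      exact (ae_restrict_iff' measurableSet_Ioc).2 hbound₂
  have hftc := intervalIntegral.integral_eq_sub_of_hasDerivAt_of_le hcx hh_cont hh_deriv
    (hint₁.add (hint₂.const_mul α))
  rw [intervalIntegral.integral_add hint₁ (hint₂.const_mul α),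
    intervalIntegral.integral_const_mul] at hftc
  have hI₂ : |∫ t in c..x, g t * (x - t) ^ (-α - 1)| ≤ M * (x - c) ^ (r - α) / (r - α) := by
    have := norm_integral_le_of_norm_le hcx hbound₂ hint_dom
    rwa [Real.norm_eq_abs, intervalIntegral.integral_const_mul, integral_sub_rpow (by linarith),
      show r - α - 1 + 1 = r - α by ring, ← mul_div_assoc] at this
  have hhc : |h c| ≤ M * (x - c) ^ (r - α) := by
    rcases hcx.lt_or_eq with hcx | rfl
    · rw [abs_mul, abs_of_nonneg (Real.rpow_nonneg (sub_nonneg.2 hcx.le) _)]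
      exact hg_bound c hcx _
    · simp [h, hgx, Real.zero_rpow (by linarith : r - α ≠ 0)]
  have hint_eq : ∫ t in c..x, g' t * (x - t) ^ (-α)
      = -h c - α * ∫ t in c..x, g t * (x - t) ^ (-α - 1) := by linarith
  calc |∫ t in c..x, g' t * (x - t) ^ (-α)|
      ≤ |h c| + α * |∫ t in c..x, g t * (x - t) ^ (-α - 1)| := by
        rw [hint_eq, ← abs_of_nonneg hα0, ← abs_mul, abs_of_nonneg hα0]
        exact (abs_sub _ _).trans (by rw [abs_neg])
    _ ≤ M * (x - c) ^ (r - α) + α * (M * (x - c) ^ (r - α) / (r - α)) := by gcongr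
    _ = M * r / (r - α) * (x - c) ^ (r - α) := by
        have : r - α ≠ 0 := (sub_pos.2 hαr).ne'
        field_simp
        ring

theorem integral_div_abs_sub_rpow_eq {φ : ℝ → ℝ} (hφ : Continuous φ) {α c x : ℝ} (hα : α < 1)
    (hcx : c ≤ x) :
    ∫ t in c..x, φ t / |x - t| ^ α
      = φ x * ((x - c) ^ (1 - α) / (1 - α)) + ∫ t in c..x, (φ t - φ x) * (x - t) ^ (-α) := by
  have hw := intervalIntegrable_sub_rpow (q := -α) (by linarith) x c x
  have hsplit : EqOn (fun t => φ t / |x - t| ^ α)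
      (fun t => φ x * (x - t) ^ (-α) + (φ t - φ x) * (x - t) ^ (-α)) (uIcc c x) := by
    intro t ht
    have hxt : 0 ≤ x - t := sub_nonneg.2 (uIcc_of_le hcx ▸ ht).2
    simp only [abs_of_nonneg hxt, Real.rpow_neg hxt, div_eq_mul_inv]
    ring
  rw [integral_congr hsplit, integral_add (hw.const_mul _)
    (hw.continuousOn_mul (g := fun t => φ t - φ x) (by fun_prop)),
    intervalIntegral.integral_const_mul,
    integral_sub_rpow (by linarith), neg_add_eq_sub]

theorem pFracGrad_eq_of_lt {α p c x : ℝ} (f : ℝ → ℝ) (hα : α < 1) (hcx : c < x) :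
    pFracGrad α p c f x = (1 - α) * (x - c) ^ (α - p) * ∫ t in c..x, deriv f t / |x - t| ^ α := by
  have hxc : 0 < x - c := sub_pos.2 hcx
  have hΓ : Real.Gamma (2 - α) = (1 - α) * Real.Gamma (1 - α) := by
    rw [show 2 - α = (1 - α) + 1 by ring, Real.Gamma_add_one (by linarith)]
  have hΓ_ne : Real.Gamma (1 - α) ≠ 0 := (Real.Gamma_pos_of_pos (by linarith)).ne'
  rw [pFracGrad, if_neg hcx.ne', caputo, hΓ, abs_of_pos hxc, Real.rpow_add_one hxc.ne']
  field_simp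

theorem HolderSmooth.abs_integral_deriv_sub_mul_rpow_le {L p α : ℝ} {f : ℝ → ℝ}
    (hsmooth : HolderSmooth L p f) (hf : ContDiff ℝ 1 f) (hα0 : 0 ≤ α) (hα1 : α < 1)
    (hαp : α < 1 + p) {c x : ℝ} (hcx : c ≤ x) :
    |∫ t in c..x, (deriv f t - deriv f x) * (x - t) ^ (-α)|
      ≤ L / (1 + p - α) * (x - c) ^ (1 + p - α) := by
  have hd : Differentiable ℝ f := hf.differentiable one_ne_zero
  have hremainder : ∀ t, HasDerivAt (fun t => f t - f x - deriv f x * (t - x))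
      (deriv f t - deriv f x) t := fun t => by
    simpa using ((hd t).hasDerivAt.sub_const (f x)).fun_sub
      (((hasDerivAt_id t).sub_const x).const_mul (deriv f x))
  have := abs_integral_mul_sub_rpow_neg_le hremainder
    ((hf.continuous_deriv le_rfl).sub continuous_const)
    (fun t => by rw [abs_sub_comm x t]; exact hsmooth x t) hα0 hα1 hαp hcx
  rwa [div_mul_cancel₀ _ (by linarith : (1 + p : ℝ) ≠ 0)] at this

theorem abs_deriv_mul_rpow_sub_pFracGrad_le_of_lt {L p α c x : ℝ} {f : ℝ → ℝ}
    (hf : ContDiff ℝ 1 f) (hsmooth : HolderSmooth L p f) (hα0 : 0 ≤ α) (hα1 : α < 1)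
    (hαp : α < 1 + p) (hcx : c < x) :
    |deriv f x * |x - c| ^ (1 - p) - pFracGrad α p c f x|
      ≤ L * (1 - α) / (1 + p - α) * |x - c| := by
  have hxc : 0 < x - c := sub_pos.2 hcx
  have hR := hsmooth.abs_integral_deriv_sub_mul_rpow_le hf hα0 hα1 hαp hcx.le
  set R := ∫ t in c..x, (deriv f t - deriv f x) * (x - t) ^ (-α)
  have hdiff : deriv f x * (x - c) ^ (1 - p) - pFracGrad α p c f x
      = -((1 - α) * (x - c) ^ (α - p) * R) := by
    rw [pFracGrad_eq_of_lt f hα1 hcx,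
      integral_div_abs_sub_rpow_eq (hf.continuous_deriv le_rfl) hα1 hcx.le,
      show 1 - p = (α - p) + (1 - α) by ring, Real.rpow_add hxc]
    field_simp [(by linarith : (1 - α) ≠ 0)]
    ring
  have hweight : 0 ≤ (1 - α) * (x - c) ^ (α - p) := by
    have : 0 ≤ 1 - α := by linarith
    positivity
  rw [abs_of_pos hxc, hdiff, abs_neg, abs_mul, abs_of_nonneg hweight]
  calc (1 - α) * (x - c) ^ (α - p) * |R|
      ≤ (1 - α) * (x - c) ^ (α - p) * (L / (1 + p - α) * (x - c) ^ (1 + p - α)) := by gcongr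
    _ = L * (1 - α) / (1 + p - α) * ((x - c) ^ (α - p) * (x - c) ^ (1 + p - α)) := by ring
    _ = L * (1 - α) / (1 + p - α) * (x - c) := by
        rw [← Real.rpow_add hxc, show α - p + (1 + p - α) = 1 by ring, Real.rpow_one]

theorem deriv_neg_comp_neg (f : ℝ → ℝ) (t : ℝ) : deriv (fun t => -f (-t)) t = deriv f (-t) := by
  rw [deriv.fun_neg, deriv_comp_neg, neg_neg]

theorem HolderSmooth.neg_comp_neg {L p : ℝ} {f : ℝ → ℝ} (hsmooth : HolderSmooth L p f) :
    HolderSmooth L p fun t => -f (-t) := by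
  intro x y
  dsimp only
  rw [deriv_neg_comp_neg, show -f (-y) - -f (-x) - deriv f (-x) * (y - x)
      = -(f (-y) - f (-x) - deriv f (-x) * (-y - -x)) by ring, abs_neg,
    show y - x = -(-y - -x) by ring, abs_neg]
  exact hsmooth (-x) (-y)

theorem caputo_neg_comp_neg (α c x : ℝ) (f : ℝ → ℝ) :
    caputo α (-c) (fun t => -f (-t)) (-x) = -caputo α c f x := by
  have hreflect : (fun t => deriv f (-t) / |-x - t| ^ α) = fun t => deriv f (-t) / |x - -t| ^ α :=
    funext fun t => by rw [show -x - t = -(x - -t) by ring, abs_neg]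
  simp only [caputo, deriv_neg_comp_neg]
  rw [hreflect, intervalIntegral.integral_comp_neg (fun t => deriv f t / |x - t| ^ α), neg_neg,
    neg_neg, intervalIntegral.integral_symm, mul_neg]

theorem pFracGrad_neg_comp_neg (α p c x : ℝ) (f : ℝ → ℝ) :
    pFracGrad α p (-c) (fun t => -f (-t)) (-x) = pFracGrad α p c f x := by
  simp only [pFracGrad, neg_inj, caputo_neg_comp_neg, neg_sub_neg, abs_sub_comm c x]
  split_ifs
  · rfl
  · rw [← neg_sub x c, div_neg]
    ring

theorem pFracGrad_approx_general (f : ℝ → ℝ) (hf : ContDiff ℝ 1 f) (L p : ℝ)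
    (hp : 0 < p) (hsmooth : HolderSmooth L p f) (α : ℝ) (hα : α ∈ Set.Ioo (0 : ℝ) 1)
    (x c : ℝ) (hxc : x ≠ c) (K : ℝ) (hK : K = L * (1 - α) / (1 + p - α)) :
    |deriv f x * |x - c| ^ (1 - p) - pFracGrad α p c f x| ≤ K * |x - c| := by
  subst hK
  obtain ⟨hα0, hα1⟩ := hα
  have hαp : α < 1 + p := by linarith
  rcases hxc.lt_or_gt with hxc | hcx
  · have := abs_deriv_mul_rpow_sub_pFracGrad_le_of_lt
      (show ContDiff ℝ 1 fun t => -f (-t) from (hf.comp contDiff_neg).neg)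
      hsmooth.neg_comp_neg hα0.le hα1 hαp (neg_lt_neg hxc)
    rwa [pFracGrad_neg_comp_neg, deriv_neg_comp_neg, neg_neg, neg_sub_neg, abs_sub_comm c x] at this
  · exact abs_deriv_mul_rpow_sub_pFracGrad_le_of_lt hf hsmooth hα0.le hα1 hαp hcx

/-- approximation of the `p`-fractional gradient operator by the first
derivative for `(L,p)`-Hölder smooth functions. -/
theorem pFracGrad_approx (f : ℝ → ℝ) (hf : ContDiff ℝ 1 f) (L p : ℝ) (hL : 0 ≤ L)
    (hp : 0 < p) (hsmooth : HolderSmooth L p f) (α : ℝ) (hα : α ∈ Set.Ioo (0 : ℝ) 1)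
    (x c : ℝ) (hxc : x ≠ c) (K : ℝ) (hK : K = L * (1 - α) / (1 + p - α)) :
    |deriv f x * |x - c| ^ (1 - p) - pFracGrad α p c f x| ≤ K * |x - c| :=
  pFracGrad_approx_general f hf L p hp hsmooth α hα x c hxc K hK
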